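/- Let (A_j)_{j ∈ J} be a family of topological abelian groups, P = ∏_{j ∈ J} A_j with the Tychonov topology and canonical embeddings τ_j : A_j → P. Let H be a complete Hausdorff topological abelian group whose identity has a neighborhood basis consisting of open subgroups (a complete nonarchimedean abelian group), and let (ψ_j)_{j ∈ J} be a convergent family of continuous homomorphisms ψ_j : A_j → H. Then there exists a unique continuous group homomorphism ω : P → H such that ψ_j = ω ∘ τ_j for all j ∈ J. -/

import Mathlib

/-!
The factorisation is forced: every `x` in the product is the unconditional product of its
coordinates `Pi.mulSingle j (x j)`, so a continuous homomorphism `ω` must send `x` to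
`∏' j, ψ j (x j)`. Conversely this product exists, since `ψ j (x j) → 1` along the cofinite
filter and `H` is complete and nonarchimedean. It is continuous because, given an open subgroup
`V`, only finitely many `ψ j` leave `V`, and `V` is closed under infinite products.
-/

open Filter Topology

section Factorization

variable {J : Type*} {H : Type*}

def IsConvergentFamily {X : J → Type*} [One H] [TopologicalSpace H] (f : ∀ j, X j → H) : Prop :=
  ∀ U ∈ 𝓝 (1 : H), {j | ¬ ∀ x, f j x ∈ U}.Finite

namespace IsConvergentFamily

variable {X : Type*}

theorem precomp {Y Z : J → Type*} [One H] [TopologicalSpace H] {f : ∀ j, Y j → H}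
    (hf : IsConvergentFamily f) (g : ∀ j, Z j → Y j) :
    IsConvergentFamily fun j z ↦ f j (g j z) :=
  fun U hU ↦ (hf U hU).subset fun _ hj h ↦ hj fun z ↦ h (g _ z)

theorem tendsto_cofinite_one [One H] [TopologicalSpace H] {f : J → X → H}
    (hf : IsConvergentFamily f) (x : X) : Tendsto (f · x) cofinite (𝓝 1) :=
  fun U hU ↦ mem_cofinite.2 <| (hf U hU).subset fun _ hj h ↦ hj (h x)

variable [CommGroup H] [UniformSpace H] [IsUniformGroup H] [NonarchimedeanGroup H]
  [CompleteSpace H]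

theorem multipliable {f : J → X → H} (hf : IsConvergentFamily f) (x : X) :
    Multipliable (f · x) :=
  NonarchimedeanGroup.multipliable_of_tendsto_cofinite_one (hf.tendsto_cofinite_one x)

theorem continuous_tprod [T2Space H] [TopologicalSpace X] {f : J → X → H}
    (hf : IsConvergentFamily f) (hcont : ∀ j, Continuous (f j)) :
    Continuous fun x ↦ ∏' j, f j x := by
  refine continuous_iff_continuousAt.2 fun x₀ ↦ ?_
  rw [ContinuousAt, ← tendsto_div_nhds_one_iff]
  intro U hU
  refine mem_map.2 ?_
  obtain ⟨V, hVU⟩ := NonarchimedeanGroup.is_nonarchimedean U hU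
  have hnear : ∀ᶠ x in 𝓝 x₀, ∀ j ∈ {j | ¬ ∀ x, f j x ∈ V}, f j x / f j x₀ ∈ V := by
    refine (eventually_all_finite (hf V V.mem_nhds_one)).2 fun j _ ↦ ?_
    have hj := ((hcont j).tendsto x₀).div_const (f j x₀)
    rw [div_self'] at hj
    exact hj V.mem_nhds_one
  filter_upwards [hnear] with x hx
  apply hVU
  dsimp only
  rw [← (hf.multipliable x).tprod_div (hf.multipliable x₀)]
  refine tprod_mem V.isClosed fun j ↦ ?_
  by_cases hj : ∀ y, f j y ∈ V
  · exact V.div_mem (hj x) (hj x₀)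
  · exact hx j hj

end IsConvergentFamily

variable [DecidableEq J] {A : J → Type*} [∀ j, CommMonoid (A j)]

section PiTopology

variable [∀ j, TopologicalSpace (A j)]

theorem Pi.hasProd_mulSingle (x : ∀ j, A j) : HasProd (fun j ↦ Pi.mulSingle j (x j)) x :=
  Pi.hasProd.2 fun k ↦ by
    simpa using hasProd_single k fun j hj ↦ Pi.mulSingle_eq_of_ne' hj (x j)

theorem ContinuousMonoidHom.pi_ext [CommMonoid H] [TopologicalSpace H] [T2Space H]
    {ω ω' : (∀ j, A j) →ₜ* H}
    (h : ∀ j a, ω (Pi.mulSingle j a) = ω' (Pi.mulSingle j a)) : ω = ω' :=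
  ext fun x ↦ ((Pi.hasProd_mulSingle x).map ω ω.continuous).unique <| by
    simpa only [Function.comp_def, h] using (Pi.hasProd_mulSingle x).map ω' ω'.continuous

end PiTopology

variable [CommMonoid H] [TopologicalSpace H] [T2Space H] [ContinuousMul H]

noncomputable def MonoidHom.piTprod (ψ : ∀ j, A j →* H)
    (hψ : ∀ x : ∀ j, A j, Multipliable fun j ↦ ψ j (x j)) : (∀ j, A j) →* H where
  toFun x := ∏' j, ψ j (x j)
  map_one' := by simp
  map_mul' x y := by
    simp only [Pi.mul_apply, map_mul]
    exact (hψ x).tprod_mul (hψ y)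

theorem MonoidHom.piTprod_mulSingle (ψ : ∀ j, A j →* H)
    (hψ : ∀ x : ∀ j, A j, Multipliable fun j ↦ ψ j (x j)) (j : J) (a : A j) :
    MonoidHom.piTprod ψ hψ (Pi.mulSingle j a) = ψ j a :=
  (tprod_eq_mulSingle j fun k hk ↦ by simp [Pi.mulSingle_eq_of_ne hk]).trans (by simp)

end Factorization

theorem exists_unique_factor_nonarchimedean_general {J : Type*} [DecidableEq J] (A : J → Type*)
    [∀ j, CommGroup (A j)] [∀ j, TopologicalSpace (A j)]
    {H : Type*} [CommGroup H] [UniformSpace H] [IsUniformGroup H]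
    [CompleteSpace H] [T2Space H] [NonarchimedeanGroup H]
    (ψ : ∀ j, A j →* H) (hcont : ∀ j, Continuous (ψ j))
    (hconv : ∀ U ∈ nhds (1 : H), {j : J | ¬ ∀ a : A j, ψ j a ∈ U}.Finite) :
    ∃! ω : ContinuousMonoidHom (∀ j, A j) H,
      ∀ (j : J) (a : A j), ω (Pi.mulSingle j a) = ψ j a := by
  have hψ : IsConvergentFamily fun j (x : ∀ k, A k) ↦ ψ j (x j) :=
    IsConvergentFamily.precomp (f := fun j ↦ ψ j) hconv fun j (x : ∀ k, A k) ↦ x j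
  have hmul : ∀ x : ∀ j, A j, Multipliable fun j ↦ ψ j (x j) := hψ.multipliable
  let ω : (∀ j, A j) →ₜ* H :=
    ⟨MonoidHom.piTprod ψ hmul, hψ.continuous_tprod fun j ↦ (hcont j).comp (continuous_apply j)⟩
  have hω : ∀ j a, ω (Pi.mulSingle j a) = ψ j a := MonoidHom.piTprod_mulSingle ψ hmul
  exact ⟨ω, hω, fun ω' hω' ↦ ContinuousMonoidHom.pi_ext fun j a ↦ (hω' j a).trans (hω j a).symm⟩

/-- Universal property of the product as conditional coproduct, for a complete
Hausdorff nonarchimedean abelian target: every convergent family of continuous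
homomorphisms `ψ_j : A_j → H` factors uniquely through the Cartesian product
`∏_j A_j` via the canonical embeddings. -/
theorem exists_unique_factor_nonarchimedean {J : Type*} [DecidableEq J] (A : J → Type*)
    [∀ j, CommGroup (A j)] [∀ j, TopologicalSpace (A j)] [∀ j, IsTopologicalGroup (A j)]
    {H : Type*} [CommGroup H] [UniformSpace H] [IsUniformGroup H]
    [CompleteSpace H] [T2Space H] [NonarchimedeanGroup H]
    (ψ : ∀ j, A j →* H) (hcont : ∀ j, Continuous (ψ j))
    (hconv : ∀ U ∈ nhds (1 : H), {j : J | ¬ ∀ a : A j, ψ j a ∈ U}.Finite) :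
    ∃! ω : ContinuousMonoidHom (∀ j, A j) H,
      ∀ (j : J) (a : A j), ω (Pi.mulSingle j a) = ψ j a :=
  exists_unique_factor_nonarchimedean_general A ψ hcont hconv
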